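/- A finite partial order P is up-regular if and only if it contains no level-induced suborder isomorphic to O_obs1 and none isomorphic to O_obs2: i.e., for all x, y, z with level(x) < level(y) = level(z) one has (x < y iff x < z) and (y < x iff z < x), if and only if there do not exist four distinct elements a, b, c, d of P with a < b, c < d, level(a) = level(c), level(b) = level(d), level(a) ≠ level(b), all other pairs incomparable except possibly c < b, realizing the relation pattern of O_obs1 (when a ∼ d, c ∼ b) or of O_obs2 (when a ∼ d and c < b). -/

import Mathlib

variable {P : Type*} [PartialOrder P]

/-- Two elements of a partial order are incomparable if neither is `≤` the other. -/
def Incomp (x y : P) : Prop := x ≠ y ∧ ¬x ≤ y ∧ ¬y ≤ x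

/-- The level of an element `x` of a finite partial order: one less than the maximum
cardinality of a chain whose greatest element is `x` (so minimal elements have
level `0`). -/
noncomputable def level [Fintype P] (x : P) : ℕ :=
  sSup {n : ℕ | ∃ C : Finset P,
    IsChain (· ≤ ·) (C : Set P) ∧ x ∈ C ∧ (∀ y ∈ C, y ≤ x) ∧ C.card = n} - 1

/-- A finite partial order is up-regular if every element stands in the same order
relation to any two elements of equal level above its own level. -/
def UpRegular (P : Type*) [PartialOrder P] [Fintype P] : Prop :=
  ∀ x y z : P, level x < level y → level y = level z →
    ((x < y ↔ x < z) ∧ (y < x ↔ z < x))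

/-- `P` contains a level-induced suborder isomorphic to `O_obs1` ('2+2'): bottom
elements `a, c` on a common level, top elements `b, d` on a common (distinct) level. -/
def HasLevelObs1 (P : Type*) [PartialOrder P] [Fintype P] : Prop :=
  ∃ a b c d : P, a < b ∧ c < d ∧
    Incomp a c ∧ Incomp a d ∧ Incomp b c ∧ Incomp b d ∧
    level a = level c ∧ level b = level d ∧ level a ≠ level b

/-- `P` contains a level-induced suborder isomorphic to `O_obs2` ('N'): bottom
elements `a, c` on a common level, top elements `b, d` on a common (distinct) level. -/
def HasLevelObs2 (P : Type*) [PartialOrder P] [Fintype P] : Prop :=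
  ∃ a b c d : P, a < b ∧ c < d ∧ c < b ∧
    Incomp a c ∧ Incomp a d ∧ Incomp b d ∧
    level a = level c ∧ level b = level d ∧ level a ≠ level b

section Aux
variable [Fintype P]

/-- The set of chain cardinalities used to define `level`. -/
def levelSet (x : P) : Set ℕ :=
  {n : ℕ | ∃ C : Finset P,
    IsChain (· ≤ ·) (C : Set P) ∧ x ∈ C ∧ (∀ y ∈ C, y ≤ x) ∧ C.card = n}

lemma one_mem_levelSet (x : P) : 1 ∈ levelSet x := by
  refine ⟨{x}, ?_, ?_, ?_, ?_⟩ <;> simp [Set.Subsingleton.isChain]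

lemma bddAbove_levelSet (x : P) : BddAbove (levelSet x) := by
  refine ⟨Fintype.card P, fun n hn => ?_⟩
  obtain ⟨C, _, _, _, rfl⟩ := hn
  simpa using Finset.card_le_card (Finset.subset_univ C)

lemma level_eq (x : P) : level x = sSup (levelSet x) - 1 := rfl

lemma sSup_levelSet (x : P) : sSup (levelSet x) = level x + 1 := by
  have h1 : 1 ≤ sSup (levelSet x) := le_csSup (bddAbove_levelSet x) (one_mem_levelSet x)
  rw [level_eq]
  omega

lemma levelSet_mem (x : P) : level x + 1 ∈ levelSet x := by
  rw [← sSup_levelSet]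
  exact Nat.sSup_mem ⟨1, one_mem_levelSet x⟩ (bddAbove_levelSet x)

lemma level_lt_level {x y : P} (h : x < y) : level x < level y := by
  classical
  obtain ⟨C, hC, hxC, hle, hcard⟩ := levelSet_mem x
  have hyC : y ∉ C := fun hy => absurd (lt_of_le_of_lt (hle y hy) h) (lt_irrefl y)
  have hmem : level x + 2 ∈ levelSet y := by
    refine ⟨insert y C, ?_, Finset.mem_insert_self _ _, ?_, ?_⟩
    · rw [Finset.coe_insert]
      exact hC.insert (fun b hb _ => Or.inr ((hle b hb).trans h.le))
    · intro z hz
      rcases Finset.mem_insert.1 hz with rfl | hz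
      · exact le_refl _
      · exact (hle z hz).trans h.le
    · rw [Finset.card_insert_of_notMem hyC, hcard]
  have := le_csSup (bddAbove_levelSet y) hmem
  rw [sSup_levelSet] at this
  omega

lemma level_le_level {x y : P} (h : x ≤ y) : level x ≤ level y := by
  rcases eq_or_lt_of_le h with rfl | h
  · exact le_refl _
  · exact (level_lt_level h).le

lemma not_le_of_level_lt {x y : P} (h : level x < level y) : ¬y ≤ x :=
  fun hle => absurd (level_le_level hle) (not_le_of_gt h)

/-- If `z` has positive level, there is `w < z` one level down. -/
lemma exists_lt_level_pred {z : P} (h : 0 < level z) :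
    ∃ w, w < z ∧ level w = level z - 1 := by
  classical
  obtain ⟨C, hC, hzC, hle, hcard⟩ := levelSet_mem z
  have hpos : 0 < (C.erase z).card := by
    rw [Finset.card_erase_of_mem hzC, hcard]; omega
  have hne : ((C.erase z : Finset P) : Set P).Nonempty := by
    obtain ⟨a, ha⟩ := Finset.card_pos.1 hpos
    exact ⟨a, by simpa [and_comm] using ha⟩
  obtain ⟨w, hw, hwmax⟩ :=
    Set.Finite.exists_maximalFor id _ ((C.erase z : Finset P) : Set P).toFinite hne
  simp only [Finset.mem_coe] at hw
  have hwC : w ∈ C := Finset.mem_of_mem_erase hw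
  have hwz : w < z := lt_of_le_of_ne (hle w hwC) (Finset.ne_of_mem_erase hw)
  have hmem : level z ∈ levelSet w := by
    refine ⟨C.erase z, ?_, hw, ?_, ?_⟩
    · exact hC.mono (by intro a ha; exact Finset.mem_coe.2 (Finset.mem_of_mem_erase (by exact_mod_cast ha)))
    · intro y hy
      have hyC : y ∈ C := Finset.mem_of_mem_erase hy
      rcases eq_or_ne y w with rfl | hyw
      · exact le_refl _
      · rcases hC (Finset.mem_coe.2 hyC) (Finset.mem_coe.2 hwC) hyw with h' | h'
        · exact h'
        · exact hwmax (Finset.mem_coe.2 hy) h'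
    · rw [Finset.card_erase_of_mem hzC, hcard]; omega
  have h1 : level z ≤ level w + 1 := by
    have := le_csSup (bddAbove_levelSet w) hmem
    rw [sSup_levelSet] at this; omega
  have h2 : level w < level z := level_lt_level hwz
  exact ⟨w, hwz, by omega⟩

/-- Below any element there is an element of each smaller level. -/
lemma exists_lt_level_eq {x z : P} (h : level x < level z) :
    ∃ w, w < z ∧ level w = level x := by
  obtain ⟨n, hn⟩ : ∃ n, level z = n := ⟨_, rfl⟩
  induction n using Nat.strong_induction_on generalizing z with
  | _ n ih =>
    obtain ⟨w, hwz, hw⟩ := exists_lt_level_pred (by omega : 0 < level z)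
    rcases eq_or_lt_of_le (by omega : level x ≤ level w) with heq | hlt
    · exact ⟨w, hwz, heq.symm⟩
    · obtain ⟨v, hvw, hv⟩ := ih (level w) (by omega) hlt rfl
      exact ⟨v, hvw.trans hwz, hv⟩

end Aux

/-- A finite partial order is up-regular if and only if it contains no level-induced
suborder isomorphic to `O_obs1` and none isomorphic to `O_obs2`. -/
theorem upRegular_iff_no_level_induced_obstruction
    (P : Type*) [PartialOrder P] [Fintype P] :
    UpRegular P ↔ (¬HasLevelObs1 P ∧ ¬HasLevelObs2 P) := by
  constructor
  · intro hUR
    constructor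
    · rintro ⟨a, b, c, d, hab, hcd, _, had, _, _, _, hbd, hla⟩
      have h1 : level a < level b := level_lt_level hab
      have := (hUR a b d h1 hbd).1
      exact had.2.1 (this.1 hab).le
    · rintro ⟨a, b, c, d, hab, hcd, _, _, had, hbd, _, hlbd, _⟩
      have h1 : level a < level b := level_lt_level hab
      have := (hUR a b d h1 hlbd).1
      exact had.2.1 (this.1 hab).le
  · rintro ⟨h1, h2⟩ x y z hxy hyz
    have key : ∀ y z : P, level x < level y → level y = level z → x < y → x < z := by
      intro y z hxy hyz hlt
      by_contra hxz
      -- x, y, z with x < y, ¬ x < z; build an obstruction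
      have hyx : ¬y ≤ x := not_le_of_level_lt hxy
      have hzx : ¬z ≤ x := not_le_of_level_lt (hyz ▸ hxy)
      have hxz' : ¬x ≤ z := fun hle => by
        rcases eq_or_lt_of_le hle with rfl | h
        · omega
        · exact hxz h
      have hixz : Incomp x z := ⟨fun h => hxz' (le_of_eq h), hxz', hzx⟩
      obtain ⟨w, hwz, hw⟩ := exists_lt_level_eq (hyz ▸ hxy : level x < level z)
      have hwx : w ≠ x := fun h => hxz (h ▸ hwz)
      have hiwx : Incomp x w := by
        refine ⟨fun h => hwx h.symm, fun h => ?_, fun h => ?_⟩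
        · have := level_lt_level (lt_of_le_of_ne h (fun e => hwx e.symm)); omega
        · have := level_lt_level (lt_of_le_of_ne h hwx); omega
      have hyz' : y ≠ z := fun h => hxz (h ▸ hlt)
      have hiyz : Incomp y z := by
        refine ⟨hyz', fun h => hyz' (le_antisymm h ?_), fun h => hyz' (le_antisymm ?_ h)⟩
        · by_contra h'
          exact absurd (level_lt_level (lt_of_le_of_ne h hyz')) (by omega)
        · by_contra h'
          exact absurd (level_lt_level (lt_of_le_of_ne h hyz'.symm)) (by omega)
      have hyw : ¬y ≤ w := not_le_of_level_lt (by omega)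
      by_cases hwy : w ≤ y
      · -- pattern O_obs2 with a = x, b = y, c = w, d = z
        have hwy' : w < y := lt_of_le_of_ne hwy (fun h => hyw (le_of_eq h.symm))
        exact h2 ⟨x, y, w, z, hlt, hwz, hwy', hiwx, hixz, hiyz, hw.symm, hyz, by omega⟩
      · -- pattern O_obs1 with a = x, b = y, c = w, d = z
        have hiyw : Incomp y w := ⟨fun h => hwy (le_of_eq h.symm), hyw, hwy⟩
        exact h1 ⟨x, y, w, z, hlt, hwz, hiwx, hixz, hiyw, hiyz, hw.symm, hyz, by omega⟩
    constructor
    · exact ⟨key y z hxy hyz, key z y (hyz ▸ hxy) hyz.symm⟩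
    · constructor
      · intro h; exact absurd (level_lt_level h).le (by omega)
      · intro h; exact absurd (level_lt_level h).le (by omega)
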